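/- arXiv:1408.6321 — 3 statements merged into one kernel-verified Lean document; each statement's English description precedes it below -/
import Mathlib

section
/- There are at most 2^(C·k²) combinatorially distinct 1-page crossing diagrams with at most k crossings, for some absolute constant C. Concretely: every 1-page crossing diagram with at most k crossings is combinatorially equivalent to one whose points are a subset of 4k fixed points on a circle, and the number of such diagrams is at most 2^(4k) · 2^(4k(4k-1)/2). -/
/-- Chords are unordered pairs of circle positions (points labelled by naturals in
circular order).  `Interleaves c d` means the chords cross with pattern `a < x < b < y`. -/
def Interleaves (c d : Sym2 ℕ) : Prop :=
  ∃ a b x y : ℕ, c = s(a, b) ∧ d = s(x, y) ∧ a < x ∧ x < b ∧ b < y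

/-- Two chords cross iff their endpoint pairs interleave in the cyclic order. -/
def Crosses (c d : Sym2 ℕ) : Prop := Interleaves c d ∨ Interleaves d c

/-- A 1-page crossing diagram: a finite set of chords among points on a circle, such
that no chord is degenerate and every chord crosses at least one other chord. The points
of the diagram are the chord endpoints, so every point is incident to a chord. -/
structure OnePageDiagram where
  chords : Finset (Sym2 ℕ)
  nondiag : ∀ c ∈ chords, ¬ c.IsDiag
  crossed : ∀ c ∈ chords, ∃ d ∈ chords, Crosses c d

/-- The points (endpoints) of the diagram. -/
def OnePageDiagram.points (D : OnePageDiagram) : Set ℕ := {p | ∃ c ∈ D.chords, p ∈ c}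

/-- The number of crossing pairs of chords; each crossing pair is counted once since
`Interleaves` orients the pair. -/
noncomputable def OnePageDiagram.crossingNumber (D : OnePageDiagram) : ℕ :=
  {p : Sym2 ℕ × Sym2 ℕ | p.1 ∈ D.chords ∧ p.2 ∈ D.chords ∧ Interleaves p.1 p.2}.ncard

/-- Cyclic betweenness for circle positions. -/
def CBtw (x y z : ℕ) : Prop := (x < y ∧ y < z) ∨ (y < z ∧ z < x) ∨ (z < x ∧ x < y)

/-- Combinatorial equivalence of diagrams: a cyclic-order-preserving bijection of their
points taking chords to chords. -/
def OnePageDiagram.Equiv (D E : OnePageDiagram) : Prop :=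
  ∃ f : ℕ → ℕ, Set.BijOn f D.points E.points ∧
    (∀ a ∈ D.points, ∀ b ∈ D.points, ∀ c ∈ D.points, CBtw a b c → CBtw (f a) (f b) (f c)) ∧
    E.chords = D.chords.image (Sym2.map f)

/-! Every chord belongs to a crossing pair, so a diagram with at most `k` crossings has at most
`2k` chords and `4k` points. Renaming each point by its rank among the points is strictly
monotone, hence preserves cyclic order and crossings, and yields an equivalent diagram on
`{0, …, 4k-1}`. A diagram is determined by its chord set, which is a subset of the
`m + m(m-1)/2` unordered pairs (diagonal ones included) of `m = 4k` points. -/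

open Finset

theorem Interleaves.map {f : ℕ → ℕ} {s : Set ℕ} (hf : StrictMonoOn f s) {c d : Sym2 ℕ}
    (hc : ∀ p ∈ c, p ∈ s) (hd : ∀ p ∈ d, p ∈ s) (h : Interleaves c d) :
    Interleaves (c.map f) (d.map f) := by
  obtain ⟨a, b, x, y, rfl, rfl, hax, hxb, hby⟩ := h
  have ha := hc a (Sym2.mem_mk_left a b)
  have hb := hc b (Sym2.mem_mk_right a b)
  have hx := hd x (Sym2.mem_mk_left x y)
  have hy := hd y (Sym2.mem_mk_right x y)
  exact ⟨f a, f b, f x, f y, rfl, rfl, hf ha hx hax, hf hx hb hxb, hf hb hy hby⟩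

theorem Crosses.map {f : ℕ → ℕ} {s : Set ℕ} (hf : StrictMonoOn f s) {c d : Sym2 ℕ}
    (hc : ∀ p ∈ c, p ∈ s) (hd : ∀ p ∈ d, p ∈ s) (h : Crosses c d) :
    Crosses (c.map f) (d.map f) :=
  h.imp (Interleaves.map hf hc hd) (Interleaves.map hf hd hc)

theorem CBtw.map {f : ℕ → ℕ} {s : Set ℕ} (hf : StrictMonoOn f s) {a b c : ℕ}
    (ha : a ∈ s) (hb : b ∈ s) (hc : c ∈ s) (h : CBtw a b c) : CBtw (f a) (f b) (f c) := by
  rcases h with ⟨h₁, h₂⟩ | ⟨h₁, h₂⟩ | ⟨h₁, h₂⟩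
  · exact Or.inl ⟨hf ha hb h₁, hf hb hc h₂⟩
  · exact Or.inr (Or.inl ⟨hf hb hc h₁, hf hc ha h₂⟩)
  · exact Or.inr (Or.inr ⟨hf hc ha h₁, hf ha hb h₂⟩)

namespace OnePageDiagram

theorem chords_injective : Function.Injective OnePageDiagram.chords := by
  rintro ⟨_, _, _⟩ ⟨_, _, _⟩ rfl
  rfl

theorem mem_points {D : OnePageDiagram} {c : Sym2 ℕ} (hc : c ∈ D.chords) {p : ℕ} (hp : p ∈ c) :
    p ∈ D.points :=
  ⟨c, hc, hp⟩

open Classical in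
theorem crossingNumber_eq_card (D : OnePageDiagram) :
    D.crossingNumber = #{p ∈ D.chords ×ˢ D.chords | Interleaves p.1 p.2} := by
  rw [crossingNumber, ← Set.ncard_coe_finset]
  congr 1
  ext p
  simp [and_assoc]

theorem card_chords_le (D : OnePageDiagram) : #D.chords ≤ 2 * D.crossingNumber := by
  classical
  set S := {p ∈ D.chords ×ˢ D.chords | Interleaves p.1 p.2}
  have hcover : D.chords ⊆ S.image Prod.fst ∪ S.image Prod.snd := by
    intro c hc
    obtain ⟨d, hd, h | h⟩ := D.crossed c hc
    · exact mem_union_left _ (mem_image.2 ⟨(c, d), by simp [S, hc, hd, h], rfl⟩)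
    · exact mem_union_right _ (mem_image.2 ⟨(d, c), by simp [S, hc, hd, h], rfl⟩)
  rw [crossingNumber_eq_card]
  calc #D.chords ≤ #(S.image Prod.fst ∪ S.image Prod.snd) := card_le_card hcover
    _ ≤ #S + #S := (card_union_le _ _).trans (add_le_add card_image_le card_image_le)
    _ = 2 * #S := (two_mul _).symm

def pointFinset (D : OnePageDiagram) : Finset ℕ := D.chords.biUnion Sym2.toFinset

theorem coe_pointFinset (D : OnePageDiagram) : (D.pointFinset : Set ℕ) = D.points := by
  ext p
  simp [pointFinset, points]

theorem card_pointFinset_le (D : OnePageDiagram) : #D.pointFinset ≤ 2 * #D.chords :=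
  calc #D.pointFinset ≤ ∑ c ∈ D.chords, #c.toFinset := card_biUnion_le
    _ ≤ ∑ _c ∈ D.chords, 2 :=
      sum_le_sum fun c _ => by rw [Sym2.card_toFinset]; split_ifs <;> omega
    _ = 2 * #D.chords := by rw [sum_const, smul_eq_mul, mul_comm]

section Relabel

variable (D : OnePageDiagram) {f : ℕ → ℕ} (hf : StrictMonoOn f D.points)

def relabel : OnePageDiagram where
  chords := D.chords.image (Sym2.map f)
  nondiag := by
    simp only [mem_image, forall_exists_index, and_imp]
    rintro _ c hc rfl
    induction c using Sym2.ind with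
    | _ a b =>
      rw [Sym2.map_mk, Sym2.mk_isDiag_iff]
      intro hab
      exact D.nondiag _ hc <| Sym2.mk_isDiag_iff.2 <|
        hf.injOn (mem_points hc (Sym2.mem_mk_left a b)) (mem_points hc (Sym2.mem_mk_right a b)) hab
  crossed := by
    simp only [mem_image, exists_exists_and_eq_and, forall_exists_index, and_imp]
    rintro _ c hc rfl
    obtain ⟨d, hd, hcd⟩ := D.crossed c hc
    exact ⟨d, hd, hcd.map hf (fun _ => mem_points hc) (fun _ => mem_points hd)⟩

theorem points_relabel : (D.relabel hf).points = f '' D.points := by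
  ext p
  simp only [points, relabel, mem_image, Set.mem_ofPred_eq, Set.mem_image]
  constructor
  · rintro ⟨_, ⟨c, hc, rfl⟩, hp⟩
    obtain ⟨q, hq, rfl⟩ := Sym2.mem_map.1 hp
    exact ⟨q, ⟨c, hc, hq⟩, rfl⟩
  · rintro ⟨q, ⟨c, hc, hq⟩, rfl⟩
    exact ⟨_, ⟨c, hc, rfl⟩, Sym2.mem_map.2 ⟨q, hq, rfl⟩⟩

theorem equiv_relabel : D.Equiv (D.relabel hf) :=
  ⟨f, D.points_relabel hf ▸ hf.injOn.bijOn_image,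
    fun _ ha _ hb _ hc h => h.map hf ha hb hc, rfl⟩

end Relabel

theorem exists_equiv_points_lt (D : OnePageDiagram) :
    ∃ E : OnePageDiagram, D.Equiv E ∧ ∀ p ∈ E.points, p < 4 * D.crossingNumber := by
  classical
  have hf : StrictMonoOn (Nat.count (· ∈ D.pointFinset)) D.points := by
    rw [← coe_pointFinset]
    exact fun _ ha _ _ hab => Nat.count_strict_mono ha hab
  refine ⟨D.relabel hf, D.equiv_relabel hf, ?_⟩
  rw [points_relabel, ← coe_pointFinset]
  rintro _ ⟨p, hp, rfl⟩
  calc Nat.count (· ∈ D.pointFinset) p < #D.pointFinset := by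
        simpa using Nat.count_lt_card D.pointFinset.finite_toSet hp
    _ ≤ 2 * #D.chords := D.card_pointFinset_le
    _ ≤ 4 * D.crossingNumber := by linarith [D.card_chords_le]

theorem ncard_points_lt_le (m : ℕ) :
    {D : OnePageDiagram | ∀ p ∈ D.points, p < m}.ncard ≤ 2 ^ (m + m * (m - 1) / 2) := by
  have hmaps : Set.MapsTo chords {D : OnePageDiagram | ∀ p ∈ D.points, p < m}
      ((range m).sym2.powerset : Set (Finset (Sym2 ℕ))) := by
    intro D hD
    rw [mem_coe, mem_powerset]
    exact fun c hc => mem_sym2_iff.2 fun p hp => mem_range.2 (hD p (mem_points hc hp))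
  calc _ ≤ ((range m).sym2.powerset : Set (Finset (Sym2 ℕ))).ncard :=
        Set.ncard_le_ncard_of_injOn _ hmaps chords_injective.injOn
    _ = #(range m).sym2.powerset := Set.ncard_coe_finset _
    _ = 2 ^ (m + m * (m - 1) / 2) := by
      rw [card_powerset, card_sym2, card_range, Nat.choose_succ_succ, Nat.choose_one_right,
        Nat.choose_two_right]

end OnePageDiagram

/-- Every 1-page crossing diagram with at most `k` crossings is combinatorially
equivalent to one whose points lie among `4k` fixed points on the circle, and the number
of such diagrams is at most `2^(4k) * 2^(4k(4k-1)/2)`. -/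
theorem onePageDiagram_enumeration (k : ℕ) :
    (∀ D : OnePageDiagram, D.crossingNumber ≤ k →
      ∃ E : OnePageDiagram, D.Equiv E ∧ ∀ p ∈ E.points, p < 4 * k) ∧
    {D : OnePageDiagram | ∀ p ∈ D.points, p < 4 * k}.ncard ≤
      2 ^ (4 * k) * 2 ^ (4 * k * (4 * k - 1) / 2) := by
  refine ⟨fun D hD => ?_, ?_⟩
  · obtain ⟨E, hDE, hE⟩ := D.exists_equiv_points_lt
    exact ⟨E, hDE, fun p hp => (hE p hp).trans_le (by omega)⟩
  · rw [← pow_add]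
    exact OnePageDiagram.ncard_points_lt_le (4 * k)
end

section
/- There are at most 2^(C·k²) combinatorially distinct 2-page crossing diagrams with at most k crossings, for some absolute constant C. -/
/-- A 2-page crossing diagram: a 1-page crossing diagram together with a 2-coloring of
its chords (the two pages `A` and `B`).  No chord is degenerate and every chord is
involved in a crossing (with a chord of its own page, which is what makes the chord
contribute to the 2-page crossing number). -/
structure TwoPageDiagram where
  chordsA : Finset (Sym2 ℕ)
  chordsB : Finset (Sym2 ℕ)
  disj : Disjoint chordsA chordsB
  nondiag : ∀ c ∈ chordsA ∪ chordsB, ¬ c.IsDiag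
  crossedA : ∀ c ∈ chordsA, ∃ d ∈ chordsA, Crosses c d
  crossedB : ∀ c ∈ chordsB, ∃ d ∈ chordsB, Crosses c d

/-- The points (endpoints) of the diagram. -/
def TwoPageDiagram.points (D : TwoPageDiagram) : Set ℕ :=
  {p | ∃ c ∈ D.chordsA ∪ D.chordsB, p ∈ c}

/-- The crossing number: the number of pairs of chords of the same color whose endpoints
interleave on the circle.  Each such pair is counted once since `Interleaves` orients it. -/
noncomputable def TwoPageDiagram.crossingNumber (D : TwoPageDiagram) : ℕ :=
  {p : Sym2 ℕ × Sym2 ℕ | p.1 ∈ D.chordsA ∧ p.2 ∈ D.chordsA ∧ Interleaves p.1 p.2}.ncard +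
  {p : Sym2 ℕ × Sym2 ℕ | p.1 ∈ D.chordsB ∧ p.2 ∈ D.chordsB ∧ Interleaves p.1 p.2}.ncard

/-- Equivalence of 2-page diagrams: a cyclic-order-preserving bijection of the points
taking chords to chords and preserving colors. -/
def TwoPageDiagram.Equiv (D E : TwoPageDiagram) : Prop :=
  ∃ f : ℕ → ℕ, Set.BijOn f D.points E.points ∧
    (∀ a ∈ D.points, ∀ b ∈ D.points, ∀ c ∈ D.points, CBtw a b c → CBtw (f a) (f b) (f c)) ∧
    E.chordsA = D.chordsA.image (Sym2.map f) ∧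
    E.chordsB = D.chordsB.image (Sym2.map f)

/-- endpoints of a chord as a finset -/
def chordEnds (c : Sym2 ℕ) : Finset ℕ :=
  Sym2.lift ⟨fun a b => ({a, b} : Finset ℕ), fun a b => Finset.pair_comm a b⟩ c

lemma mem_chordEnds {p : ℕ} {c : Sym2 ℕ} : p ∈ chordEnds c ↔ p ∈ c := by
  induction c using Sym2.ind with
  | _ a b => simp [chordEnds, Sym2.mem_iff, Finset.mem_insert]

lemma card_chordEnds (c : Sym2 ℕ) : (chordEnds c).card ≤ 2 := by
  induction c using Sym2.ind with
  | _ a b =>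
    simp only [chordEnds, Sym2.lift_mk]
    exact (Finset.card_insert_le _ _).trans (by simp)

/-- points of a diagram as a finset -/
def TwoPageDiagram.ptsFinset (D : TwoPageDiagram) : Finset ℕ :=
  (D.chordsA ∪ D.chordsB).biUnion chordEnds

lemma TwoPageDiagram.mem_ptsFinset {D : TwoPageDiagram} {p : ℕ} :
    p ∈ D.ptsFinset ↔ p ∈ D.points := by
  simp [ptsFinset, points, Finset.mem_biUnion, mem_chordEnds]

lemma TwoPageDiagram.ext' {D E : TwoPageDiagram}
    (h1 : D.chordsA = E.chordsA) (h2 : D.chordsB = E.chordsB) : D = E := by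
  cases D; cases E; cases h1; cases h2; rfl

/-- There are at most `2^(C·k²)` combinatorially distinct 2-page crossing diagrams with
at most `k` crossings, for some absolute constant `C`: there is a finite set `R` of
representatives of that size containing a representative of every such diagram. -/
theorem twoPageDiagram_enumeration :
    ∃ C : ℕ, ∀ k : ℕ, ∃ R : Set TwoPageDiagram, R.Finite ∧
      R.ncard ≤ 2 ^ (C * k ^ 2) ∧
      ∀ D : TwoPageDiagram, D.crossingNumber ≤ k → ∃ E ∈ R, D.Equiv E := by
  classical
  use 20
  intro k
  set S : Finset (Sym2 ℕ) := (Finset.range (4 * k)).sym2 with hS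
  set R : Set TwoPageDiagram := {E : TwoPageDiagram | E.chordsA ⊆ S ∧ E.chordsB ⊆ S} with hR
  have hΦinj : Function.Injective
      (fun E : TwoPageDiagram => (E.chordsA, E.chordsB)) := by
    intro D E h
    exact TwoPageDiagram.ext' (congrArg Prod.fst h) (congrArg Prod.snd h)
  have hRsub : (fun E : TwoPageDiagram => (E.chordsA, E.chordsB)) '' R
      ⊆ ↑(S.powerset ×ˢ S.powerset) := by
    rintro p ⟨E, hE, rfl⟩
    simp only [Finset.coe_product, Set.mem_prod, Finset.mem_coe, Finset.mem_powerset]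
    exact hE
  have hRfin : R.Finite := by
    have := Set.Finite.subset (Finset.finite_toSet _) hRsub
    exact Set.Finite.of_finite_image this hΦinj.injOn
  refine ⟨R, hRfin, ?_, ?_⟩
  · -- cardinality bound
    have h1 : R.ncard = ((fun E : TwoPageDiagram => (E.chordsA, E.chordsB)) '' R).ncard :=
      (Set.ncard_image_of_injective _ hΦinj).symm
    have h2 : ((fun E : TwoPageDiagram => (E.chordsA, E.chordsB)) '' R).ncard
        ≤ (S.powerset ×ˢ S.powerset).card := by
      rw [← Set.ncard_coe_finset]
      exact Set.ncard_le_ncard hRsub (Finset.finite_toSet _)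
    have h3 : (S.powerset ×ˢ S.powerset).card = 2 ^ (2 * S.card) := by
      rw [Finset.card_product, Finset.card_powerset, ← pow_add]
      ring_nf
    have h4 : 2 * S.card ≤ 20 * k ^ 2 := by
      rw [hS, Finset.card_sym2, Finset.card_range]
      rw [Nat.choose_two_right, Nat.add_sub_cancel]
      have h1 : (4*k+1) * (4*k) = 2 * (8*k^2+2*k) := by ring
      rw [h1, Nat.mul_div_cancel_left _ (by norm_num)]
      have : k ≤ k^2 := Nat.le_self_pow two_ne_zero k
      nlinarith
    calc R.ncard ≤ 2 ^ (2 * S.card) := by rw [h1, ← h3]; exact h2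
      _ ≤ 2 ^ (20 * k ^ 2) := Nat.pow_le_pow_right (by norm_num) h4
  · -- main construction
    intro D hk
    set A := D.chordsA with hA
    set B := D.chordsB with hB
    set TA : Finset (Sym2 ℕ × Sym2 ℕ) :=
      (A ×ˢ A).filter (fun p => Interleaves p.1 p.2) with hTA
    set TB : Finset (Sym2 ℕ × Sym2 ℕ) :=
      (B ×ˢ B).filter (fun p => Interleaves p.1 p.2) with hTB
    have hcnA : {p : Sym2 ℕ × Sym2 ℕ | p.1 ∈ A ∧ p.2 ∈ A ∧ Interleaves p.1 p.2} = ↑TA := by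
      ext p
      simp [hTA, Finset.mem_filter, Finset.mem_product, and_assoc]
    have hcnB : {p : Sym2 ℕ × Sym2 ℕ | p.1 ∈ B ∧ p.2 ∈ B ∧ Interleaves p.1 p.2} = ↑TB := by
      ext p
      simp [hTB, Finset.mem_filter, Finset.mem_product, and_assoc]
    have hcn : D.crossingNumber = TA.card + TB.card := by
      rw [TwoPageDiagram.crossingNumber, hcnA, hcnB,
        Set.ncard_coe_finset, Set.ncard_coe_finset]
    -- chord count bounds
    have keyA : A ⊆ TA.image Prod.fst ∪ TA.image Prod.snd := by
      intro c hc
      obtain ⟨d, hd, hcd⟩ := D.crossedA c hc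
      rcases hcd with h | h
      · exact Finset.mem_union_left _ (Finset.mem_image.mpr
          ⟨(c, d), Finset.mem_filter.mpr ⟨Finset.mem_product.mpr ⟨hc, hd⟩, h⟩, rfl⟩)
      · exact Finset.mem_union_right _ (Finset.mem_image.mpr
          ⟨(d, c), Finset.mem_filter.mpr ⟨Finset.mem_product.mpr ⟨hd, hc⟩, h⟩, rfl⟩)
    have keyB : B ⊆ TB.image Prod.fst ∪ TB.image Prod.snd := by
      intro c hc
      obtain ⟨d, hd, hcd⟩ := D.crossedB c hc
      rcases hcd with h | h
      · exact Finset.mem_union_left _ (Finset.mem_image.mpr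
          ⟨(c, d), Finset.mem_filter.mpr ⟨Finset.mem_product.mpr ⟨hc, hd⟩, h⟩, rfl⟩)
      · exact Finset.mem_union_right _ (Finset.mem_image.mpr
          ⟨(d, c), Finset.mem_filter.mpr ⟨Finset.mem_product.mpr ⟨hd, hc⟩, h⟩, rfl⟩)
    have hcardA : A.card ≤ 2 * TA.card := by
      calc A.card ≤ (TA.image Prod.fst ∪ TA.image Prod.snd).card := Finset.card_le_card keyA
        _ ≤ (TA.image Prod.fst).card + (TA.image Prod.snd).card := Finset.card_union_le _ _
        _ ≤ TA.card + TA.card := Nat.add_le_add (Finset.card_image_le) (Finset.card_image_le)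
        _ = 2 * TA.card := (two_mul _).symm
    have hcardB : B.card ≤ 2 * TB.card := by
      calc B.card ≤ (TB.image Prod.fst ∪ TB.image Prod.snd).card := Finset.card_le_card keyB
        _ ≤ (TB.image Prod.fst).card + (TB.image Prod.snd).card := Finset.card_union_le _ _
        _ ≤ TB.card + TB.card := Nat.add_le_add (Finset.card_image_le) (Finset.card_image_le)
        _ = 2 * TB.card := (two_mul _).symm
    set P : Finset ℕ := D.ptsFinset with hP
    have hPcard : P.card ≤ 4 * k := by
      have h1 : P.card ≤ ∑ c ∈ (A ∪ B), (chordEnds c).card := Finset.card_biUnion_le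
      have h2 : ∑ c ∈ (A ∪ B), (chordEnds c).card ≤ (A ∪ B).card * 2 := by
        calc ∑ c ∈ (A ∪ B), (chordEnds c).card ≤ ∑ _c ∈ (A ∪ B), 2 :=
              Finset.sum_le_sum (fun c _ => card_chordEnds c)
          _ = (A ∪ B).card * 2 := by rw [Finset.sum_const, smul_eq_mul]
      have h3 : (A ∪ B).card ≤ A.card + B.card := Finset.card_union_le _ _
      have h4 : TA.card + TB.card ≤ k := hcn ▸ hk
      omega
    -- the normalizing map
    set ι : Fin P.card ≃o {x // x ∈ P} := P.orderIsoOfFin rfl with hι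
    set f : ℕ → ℕ := fun p => if h : p ∈ P then (ι.symm ⟨p, h⟩ : ℕ) else P.card + p with hf
    have hflt : ∀ p ∈ P, f p < P.card := by
      intro p hp
      simp only [hf, dif_pos hp]
      exact (ι.symm ⟨p, hp⟩).is_lt
    have hfge : ∀ p ∉ P, f p = P.card + p := by
      intro p hp
      simp only [hf, dif_neg hp]
    have hmono : ∀ p ∈ P, ∀ q ∈ P, p < q → f p < f q := by
      intro p hp q hq hpq
      simp only [hf, dif_pos hp, dif_pos hq]
      have : ι.symm ⟨p, hp⟩ < ι.symm ⟨q, hq⟩ :=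
        ι.symm.lt_iff_lt.mpr (Subtype.mk_lt_mk.mpr hpq)
      exact this
    have hinj : Function.Injective f := by
      intro p q h
      by_cases hp : p ∈ P <;> by_cases hq : q ∈ P
      · rcases lt_trichotomy p q with h' | h' | h'
        · exact absurd h (Nat.ne_of_lt (hmono p hp q hq h'))
        · exact h'
        · exact absurd h.symm (Nat.ne_of_lt (hmono q hq p hp h'))
      · have := hflt p hp; rw [hfge q hq] at h; omega
      · have := hflt q hq; rw [hfge p hp] at h; omega
      · rw [hfge p hp, hfge q hq] at h; omega
    have hmemP : ∀ c ∈ A ∪ B, ∀ p ∈ c, p ∈ P := by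
      intro c hc p hp
      exact TwoPageDiagram.mem_ptsFinset.mpr ⟨c, hc, hp⟩
    have hcross : ∀ c ∈ A ∪ B, ∀ d ∈ A ∪ B, Interleaves c d →
        Interleaves (Sym2.map f c) (Sym2.map f d) := by
      rintro c hc d hd ⟨a, b, x, y, rfl, rfl, h1, h2, h3⟩
      have ha : a ∈ P := hmemP _ hc a (Sym2.mem_mk_left a b)
      have hb : b ∈ P := hmemP _ hc b (Sym2.mem_mk_right a b)
      have hx : x ∈ P := hmemP _ hd x (Sym2.mem_mk_left x y)
      have hy : y ∈ P := hmemP _ hd y (Sym2.mem_mk_right x y)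
      exact ⟨f a, f b, f x, f y, rfl, rfl,
        hmono a ha x hx h1, hmono x hx b hb h2, hmono b hb y hy h3⟩
    set E : TwoPageDiagram :=
      { chordsA := A.image (Sym2.map f)
        chordsB := B.image (Sym2.map f)
        disj := (Finset.disjoint_image (Sym2.map.injective hinj)).mpr D.disj
        nondiag := by
          intro c' hc'
          rw [← Finset.image_union] at hc'
          obtain ⟨c, hc, rfl⟩ := Finset.mem_image.mp hc'
          exact fun h => D.nondiag c hc ((Sym2.isDiag_map hinj).mp h)
        crossedA := by
          intro c' hc'
          obtain ⟨c, hc, rfl⟩ := Finset.mem_image.mp hc'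
          obtain ⟨d, hd, hcd⟩ := D.crossedA c hc
          refine ⟨Sym2.map f d, Finset.mem_image_of_mem _ hd, ?_⟩
          rcases hcd with h | h
          · exact Or.inl (hcross c (Finset.mem_union_left _ hc)
              d (Finset.mem_union_left _ hd) h)
          · exact Or.inr (hcross d (Finset.mem_union_left _ hd)
              c (Finset.mem_union_left _ hc) h)
        crossedB := by
          intro c' hc'
          obtain ⟨c, hc, rfl⟩ := Finset.mem_image.mp hc'
          obtain ⟨d, hd, hcd⟩ := D.crossedB c hc
          refine ⟨Sym2.map f d, Finset.mem_image_of_mem _ hd, ?_⟩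
          rcases hcd with h | h
          · exact Or.inl (hcross c (Finset.mem_union_right _ hc)
              d (Finset.mem_union_right _ hd) h)
          · exact Or.inr (hcross d (Finset.mem_union_right _ hd)
              c (Finset.mem_union_right _ hc) h) } with hE
    have hEunion : E.chordsA ∪ E.chordsB = (A ∪ B).image (Sym2.map f) := by
      simp only [hE, Finset.image_union]
    refine ⟨E, ?_, ?_⟩
    · -- E ∈ R
      constructor <;>
      · intro c' hc'
        obtain ⟨c, hc, rfl⟩ := Finset.mem_image.mp hc'
        rw [hS, Finset.mem_sym2_iff]
        intro q hq
        obtain ⟨p, hp, rfl⟩ := Sym2.mem_map.mp hq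
        have hpP : p ∈ P := by
          first
          | exact hmemP c (Finset.mem_union_left _ hc) p hp
          | exact hmemP c (Finset.mem_union_right _ hc) p hp
        rw [Finset.mem_range]
        exact lt_of_lt_of_le (hflt p hpP) hPcard
    · -- D.Equiv E
      refine ⟨f, ⟨?_, hinj.injOn, ?_⟩, ?_, rfl, rfl⟩
      · -- MapsTo
        rintro p ⟨c, hc, hpc⟩
        exact ⟨Sym2.map f c, hEunion ▸ Finset.mem_image_of_mem _ hc,
          Sym2.mem_map.mpr ⟨p, hpc, rfl⟩⟩
      · -- SurjOn
        rintro q ⟨c', hc', hqc'⟩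
        rw [hEunion] at hc'
        obtain ⟨c, hc, rfl⟩ := Finset.mem_image.mp hc'
        obtain ⟨p, hp, rfl⟩ := Sym2.mem_map.mp hqc'
        exact ⟨p, ⟨c, hc, hp⟩, rfl⟩
      · -- CBtw
        rintro a ⟨ca, hca, hac⟩ b ⟨cb, hcb, hbc⟩ c ⟨cc, hcc, hccm⟩ h
        have haP : a ∈ P := hmemP _ hca a hac
        have hbP : b ∈ P := hmemP _ hcb b hbc
        have hcP : c ∈ P := hmemP _ hcc c hccm
        rcases h with ⟨h1, h2⟩ | ⟨h1, h2⟩ | ⟨h1, h2⟩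
        · exact Or.inl ⟨hmono a haP b hbP h1, hmono b hbP c hcP h2⟩
        · exact Or.inr (Or.inl ⟨hmono b hbP c hcP h1, hmono c hcP a haP h2⟩)
        · exact Or.inr (Or.inr ⟨hmono c hcP a haP h1, hmono a haP b hbP h2⟩)
end

section
/- If a graph G can be partitioned as follows — a set W of at most 4k vertices, edges F among W that produce at most k interleaving pairs under some linear ordering v₀,…,v_ℓ of W, a partition U₀,…,U_ℓ of V∖W with no edges between distinct Uᵢ and Uⱼ, and for each i an outerplanar embedding of the induced subgraph on Uᵢ ∪ {vᵢ, vᵢ₊₁} with vᵢ and vᵢ₊₁ consecutive on the outer face, and F contains every edge of the induced subgraph on W — then G has a 1-page drawing with at most k crossings. -/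
/-- Two edges with endpoints among the spine vertices `v 0, …, v (m-1)` cross when these
vertices are placed in the order of their indices.  Each crossing pair is counted once
(the edge with the smaller first index comes first). -/
def CrossIdx {m : ℕ} {V : Type*} (v : Fin m → V) (e f : Sym2 V) : Prop :=
  ∃ a b c d : Fin m, e = s(v a, v b) ∧ f = s(v c, v d) ∧ a < c ∧ c < b ∧ b < d

/-- Cyclic successor on `Fin m`. -/
def fsucc {m : ℕ} (i : Fin m) : Fin m := ⟨(i.1 + 1) % m, Nat.mod_lt _ i.pos⟩

namespace OPAux

noncomputable def rk {V : Type} (U : Set V) (t : V → ℕ) (x : V) : ℕ :=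
  {y ∈ U | t y < t x}.ncard

lemma rk_lt_rk {V : Type} [Fintype V] {U : Set V} {t : V → ℕ} {x y : V}
    (hx : x ∈ U) (h : t x < t y) : rk U t x < rk U t y := by
  have hAB : {z ∈ U | t z < t x} ⊆ {z ∈ U | t z < t y} :=
    fun z hz => ⟨hz.1, lt_trans hz.2 h⟩
  refine Set.ncard_lt_ncard ?_ (Set.toFinite _)
  exact (Set.ssubset_iff_of_subset hAB).mpr ⟨x, ⟨hx, h⟩, fun hc => lt_irrefl _ hc.2⟩

lemma rk_lt_card {V : Type} [Fintype V] (U : Set V) (t : V → ℕ) (x : V) :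
    rk U t x < Fintype.card V := by
  have h : {z ∈ U | t z < t x} ⊂ Set.univ := by
    refine (Set.ssubset_iff_of_subset (Set.subset_univ _)).mpr
      ⟨x, trivial, fun hc => lt_irrefl _ hc.2⟩
  have := Set.ncard_lt_ncard h Set.finite_univ
  rwa [Set.ncard_univ, Nat.card_eq_fintype_card] at this

open Classical in
noncomputable def pos {V : Type} {m : ℕ} (B : ℕ) (v : Fin m → V) (U : Fin m → Set V)
    (t : Fin m → V → ℕ) (x : V) : ℕ :=
  if h : ∃ i, v i = x then (Classical.choose h).1 * B
  else if h2 : ∃ i, x ∈ U i then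
    (Classical.choose h2).1 * B + 1 + rk (U (Classical.choose h2)) (t (Classical.choose h2)) x
  else 0

lemma pos_v {V : Type} {m : ℕ} (B : ℕ) (v : Fin m → V) (U : Fin m → Set V)
    (t : Fin m → V → ℕ) (hv : Function.Injective v) (i : Fin m) :
    pos B v U t (v i) = i.1 * B := by
  have h : ∃ j, v j = v i := ⟨i, rfl⟩
  rw [pos, dif_pos h, hv (Classical.choose_spec h)]

lemma pos_U {V : Type} {m : ℕ} (B : ℕ) (v : Fin m → V) (U : Fin m → Set V)
    (t : Fin m → V → ℕ) (hnr : ∀ j, Disjoint (U j) (Set.range v))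
    (hUdisj : Pairwise fun i j => Disjoint (U i) (U j)) {i : Fin m} {x : V} (hx : x ∈ U i) :
    pos B v U t x = i.1 * B + 1 + rk (U i) (t i) x := by
  have h1 : ¬ ∃ j, v j = x := by
    rintro ⟨j, rfl⟩
    exact Set.disjoint_left.mp (hnr i) hx ⟨j, rfl⟩
  have h2 : ∃ j, x ∈ U j := ⟨i, hx⟩
  rw [pos, dif_neg h1, dif_pos h2]
  have hc : Classical.choose h2 = i := by
    by_contra hne
    exact Set.disjoint_left.mp (hUdisj hne) (Classical.choose_spec h2) hx
  rw [hc]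

lemma mul_ne (B i j r : ℕ) (hr : r + 1 < B) : i * B ≠ j * B + 1 + r := by
  intro h
  rcases le_or_gt i j with hle | hlt
  · have h2 := Nat.mul_le_mul_right B hle
    linarith
  · have h2 := Nat.mul_le_mul_right B (show j + 1 ≤ i from hlt)
    have h3 : (j + 1) * B = j * B + B := by ring
    linarith

lemma exists_cross {V : Type} (σ : V → ℕ) (e f : Sym2 V)
    (h : Interleaves (Sym2.map σ e) (Sym2.map σ f)) :
    ∃ p q r s : V, e = s(p, q) ∧ f = s(r, s) ∧ σ p < σ r ∧ σ r < σ q ∧ σ q < σ s := by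
  obtain ⟨a, b, x, y, he, hf, h1, h2, h3⟩ := h
  obtain ⟨⟨p, q⟩, hpq⟩ := e.exists_rep
  obtain ⟨⟨r, s⟩, hrs⟩ := f.exists_rep
  have hepq : e = s(p, q) := hpq.symm
  have hfrs : f = s(r, s) := hrs.symm
  rw [hepq, Sym2.map_pair_eq] at he
  rw [hfrs, Sym2.map_pair_eq] at hf
  rcases Sym2.eq_iff.mp he with ⟨hea, heb⟩ | ⟨hea, heb⟩ <;>
    rcases Sym2.eq_iff.mp hf with ⟨hfa, hfb⟩ | ⟨hfa, hfb⟩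
  · exact ⟨p, q, r, s, hepq, hfrs, by omega, by omega, by omega⟩
  · exact ⟨p, q, s, r, hepq, hfrs.trans (Sym2.eq_swap), by omega, by omega, by omega⟩
  · exact ⟨q, p, r, s, hepq.trans (Sym2.eq_swap), hfrs, by omega, by omega, by omega⟩
  · exact ⟨q, p, s, r, hepq.trans (Sym2.eq_swap), hfrs.trans (Sym2.eq_swap), by omega, by omega, by omega⟩

lemma rotation {V : Type} (σ τ : V → ℕ) (S : Set V) (w : V)
    (horder : ∀ x ∈ S, ∀ y ∈ S, x ≠ w → y ≠ w → (σ x < σ y ↔ τ x < τ y))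
    (hτmax : ∀ x ∈ S, x ≠ w → τ x < τ w)
    (hcase : (∀ x ∈ S, x ≠ w → σ x < σ w) ∨ (∀ x ∈ S, x ≠ w → σ w < σ x))
    {e f : Sym2 V} (he : ∀ x ∈ e, x ∈ S) (hf : ∀ x ∈ f, x ∈ S)
    (h : Interleaves (Sym2.map σ e) (Sym2.map σ f)) :
    Interleaves (Sym2.map τ e) (Sym2.map τ f) ∨ Interleaves (Sym2.map τ f) (Sym2.map τ e) := by
  obtain ⟨p, q, r, s, hepq, hfrs, h1, h2, h3⟩ := exists_cross σ e f h
  have hp : p ∈ S := he p (by rw [hepq]; exact Sym2.mem_mk_left p q)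
  have hq : q ∈ S := he q (by rw [hepq]; exact Sym2.mem_mk_right p q)
  have hr : r ∈ S := hf r (by rw [hfrs]; exact Sym2.mem_mk_left r s)
  have hs : s ∈ S := hf s (by rw [hfrs]; exact Sym2.mem_mk_right r s)
  by_cases hwp : p = w
  · subst hwp
    rcases hcase with hc | hc
    · exfalso
      have hrp : r ≠ p := fun h' => by rw [h'] at h1; exact lt_irrefl _ h1
      exact absurd (hc r hr hrp) (not_lt.mpr (le_of_lt h1))
    · have hqp : q ≠ p := fun h' => by rw [h'] at h2; exact absurd (lt_trans h1 h2) (lt_irrefl _)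
      have hrp : r ≠ p := fun h' => by rw [h'] at h1; exact lt_irrefl _ h1
      have hsp : s ≠ p := fun h' => by
        rw [h'] at h3; exact absurd (lt_trans h1 (lt_trans h2 h3)) (lt_irrefl _)
      have o1 : τ r < τ q := (horder r hr q hq hrp hqp).mp h2
      have o2 : τ q < τ s := (horder q hq s hs hqp hsp).mp h3
      have o3 : τ s < τ p := hτmax s hs hsp
      right
      exact ⟨τ r, τ s, τ q, τ p, by rw [hfrs, Sym2.map_pair_eq],
        by rw [hepq, Sym2.map_pair_eq]; exact Sym2.eq_swap, o1, o2, o3⟩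
  · by_cases hws : s = w
    · subst hws
      rcases hcase with hc | hc
      · have hqs : q ≠ s := fun h' => by rw [h'] at h3; exact lt_irrefl _ h3
        have hrs' : r ≠ s := fun h' => by
          rw [h'] at h2; exact absurd (lt_trans h2 h3) (lt_irrefl _)
        have o1 : τ p < τ r := (horder p hp r hr hwp hrs').mp h1
        have o2 : τ r < τ q := (horder r hr q hq hrs' hqs).mp h2
        have o3 : τ q < τ s := hτmax q hq hqs
        left
        exact ⟨τ p, τ q, τ r, τ s, by rw [hepq, Sym2.map_pair_eq],
          by rw [hfrs, Sym2.map_pair_eq], o1, o2, o3⟩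
      · exfalso
        exact absurd (hc p hp hwp) (not_lt.mpr (le_of_lt (lt_trans h1 (lt_trans h2 h3))))
    · by_cases hwq : q = w
      · exfalso
        subst hwq
        rcases hcase with hc | hc
        · have hsq : s ≠ q := fun h' => by rw [h'] at h3; exact lt_irrefl _ h3
          exact absurd (hc s hs hsq) (not_lt.mpr (le_of_lt h3))
        · exact absurd (hc p hp hwp) (not_lt.mpr (le_of_lt (lt_trans h1 h2)))
      · by_cases hwr : r = w
        · exfalso
          subst hwr
          rcases hcase with hc | hc
          · exact absurd (hc q hq hwq) (not_lt.mpr (le_of_lt h2))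
          · exact absurd (hc p hp hwp) (not_lt.mpr (le_of_lt h1))
        · have o1 : τ p < τ r := (horder p hp r hr hwp hwr).mp h1
          have o2 : τ r < τ q := (horder r hr q hq hwr hwq).mp h2
          have o3 : τ q < τ s := (horder q hq s hs hwq hws).mp h3
          exact Or.inl ⟨τ p, τ q, τ r, τ s, by rw [hepq, Sym2.map_pair_eq],
            by rw [hfrs, Sym2.map_pair_eq], o1, o2, o3⟩

end OPAux

/-- Sufficiency of the structural decomposition for 1-page drawings with few crossings:
if `G` decomposes into a set `W = {v 0, …, v (m-1)}` of at most `4k` vertices, a set `F`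
of edges among `W` containing all induced edges on `W` and producing at most `k`
interleaving pairs under the ordering `v 0, …, v (m-1)`, and a partition `U 0, …, U (m-1)`
of `V ∖ W` with no edges between distinct parts, every remaining edge lying in some piece
`U i ∪ {v i, v (i+1)}`, and each such piece having an outerplanar (circular non-crossing)
embedding in which `v i` and `v (i+1)` are consecutive on the outer face (here: `U i` is
drawn entirely between them), then `G` has a 1-page drawing with at most `k` crossings. -/
theorem onePage_of_decomposition {V : Type} [Fintype V] (G : SimpleGraph V)
    (k m : ℕ) (hm : m ≤ 4 * k) (v : Fin m → V) (hv : Function.Injective v)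
    (F : Finset (Sym2 V)) (hFE : ↑F ⊆ G.edgeSet)
    (hFW : ∀ e ∈ F, ∀ x ∈ e, x ∈ Set.range v)
    (hWF : ∀ e ∈ G.edgeSet, (∀ x ∈ e, x ∈ Set.range v) → e ∈ F)
    (hcross : {p : Sym2 V × Sym2 V | p.1 ∈ F ∧ p.2 ∈ F ∧ CrossIdx v p.1 p.2}.ncard ≤ k)
    (U : Fin m → Set V)
    (hUdisj : Pairwise fun i j => Disjoint (U i) (U j))
    (hUcover : (⋃ i, U i) = Set.univ \ Set.range v)
    (hUsep : ∀ i j, i ≠ j → ∀ a ∈ U i, ∀ b ∈ U j, ¬ G.Adj a b)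
    (hpieces : ∀ e ∈ G.edgeSet, e ∈ F ∨
      ∃ i : Fin m, ∀ x ∈ e, x ∈ U i ∪ {v i, v (fsucc i)})
    (houter : ∀ i : Fin m, ∃ τ : V → ℕ,
      Set.InjOn τ (U i ∪ {v i, v (fsucc i)}) ∧
      (∀ x ∈ U i, τ (v i) < τ x ∧ τ x < τ (v (fsucc i))) ∧
      (∀ e ∈ G.edgeSet, ∀ f ∈ G.edgeSet,
        (∀ x ∈ e, x ∈ U i ∪ {v i, v (fsucc i)}) →
        (∀ x ∈ f, x ∈ U i ∪ {v i, v (fsucc i)}) →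
        ¬ Interleaves (e.map τ) (f.map τ))) :
    ∃ σ : V → ℕ, Function.Injective σ ∧
      {p : Sym2 V × Sym2 V | p.1 ∈ G.edgeSet ∧ p.2 ∈ G.edgeSet ∧
        Interleaves (p.1.map σ) (p.2.map σ)}.ncard ≤ k := by
  classical
  set B : ℕ := Fintype.card V + 1 with hBdef
  have hBpos : 0 < B := Nat.succ_pos _
  choose t ht1 ht2 ht3 using houter
  set σ : V → ℕ := OPAux.pos B v U t with hσdef
  have hnr : ∀ j, Disjoint (U j) (Set.range v) := by
    intro j
    rw [Set.disjoint_left]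
    intro x hx hxr
    have hx2 : x ∈ ⋃ i, U i := Set.mem_iUnion.mpr ⟨j, hx⟩
    rw [hUcover] at hx2
    exact hx2.2 hxr
  have hpv : ∀ i : Fin m, σ (v i) = i.1 * B := fun i => by
    rw [hσdef]; exact OPAux.pos_v B v U t hv i
  have hpU : ∀ (i : Fin m) (x : V), x ∈ U i → σ x = i.1 * B + 1 + OPAux.rk (U i) (t i) x :=
    fun i x hx => by rw [hσdef]; exact OPAux.pos_U B v U t hnr hUdisj hx
  have hUlow : ∀ (i : Fin m) (x : V), x ∈ U i → i.1 * B < σ x := by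
    intro i x hx; rw [hpU i x hx]; linarith [Nat.zero_le (OPAux.rk (U i) (t i) x)]
  have hUhigh : ∀ (i : Fin m) (x : V), x ∈ U i → σ x < i.1 * B + B := by
    intro i x hx; rw [hpU i x hx]
    have h := OPAux.rk_lt_card (U i) (t i) x
    linarith
  have classify : ∀ x : V, (∃ i, v i = x) ∨ (∃ i, x ∈ U i) := by
    intro x
    by_cases hx : x ∈ Set.range v
    · exact Or.inl hx
    · right
      have hx2 : x ∈ ⋃ i, U i := by rw [hUcover]; exact ⟨trivial, hx⟩
      exact Set.mem_iUnion.mp hx2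
  have hUord : ∀ (i : Fin m), ∀ x ∈ U i, ∀ y ∈ U i, (σ x < σ y ↔ t i x < t i y) := by
    intro i x hx y hy
    rw [hpU i x hx, hpU i y hy]
    constructor
    · intro h
      have hrk : OPAux.rk (U i) (t i) x < OPAux.rk (U i) (t i) y := by linarith
      rcases lt_trichotomy (t i x) (t i y) with h' | h' | h'
      · exact h'
      · exfalso
        have he : OPAux.rk (U i) (t i) x = OPAux.rk (U i) (t i) y := by
          unfold OPAux.rk; rw [h']
        rw [he] at hrk; exact lt_irrefl _ hrk
      · exact absurd hrk (not_lt.mpr (le_of_lt (OPAux.rk_lt_rk hy h')))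
    · intro h
      have := OPAux.rk_lt_rk hx h
      linarith
  have hinj : Function.Injective σ := by
    intro x y hxy
    rcases classify x with ⟨i, rfl⟩ | ⟨i, hx⟩ <;> rcases classify y with ⟨j, rfl⟩ | ⟨j, hy⟩
    · rw [hpv i, hpv j] at hxy
      exact congrArg v (Fin.ext (Nat.eq_of_mul_eq_mul_right hBpos hxy))
    · exfalso
      rw [hpv i, hpU j y hy] at hxy
      exact OPAux.mul_ne B i.1 j.1 _
        (by have := OPAux.rk_lt_card (U j) (t j) y; omega) hxy
    · exfalso
      rw [hpv j, hpU i x hx] at hxy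
      exact OPAux.mul_ne B j.1 i.1 _
        (by have := OPAux.rk_lt_card (U i) (t i) x; omega) hxy.symm
    · rcases eq_or_ne i j with rfl | hne
      · have h1 := hUord i x hx y hy
        have h2 := hUord i y hy x hx
        have ht : t i x = t i y := by
          rcases lt_trichotomy (t i x) (t i y) with h' | h' | h'
          · exact absurd (h1.mpr h') (by rw [hxy]; exact lt_irrefl _)
          · exact h'
          · exact absurd (h2.mpr h') (by rw [hxy]; exact lt_irrefl _)
        exact ht1 i (Set.mem_union_left _ hx) (Set.mem_union_left _ hy) ht
      · exfalso
        have l1 := hUlow i x hx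
        have l2 := hUhigh i x hx
        have l3 := hUlow j y hy
        have l4 := hUhigh j y hy
        have hne' : i.1 ≠ j.1 := fun h => hne (Fin.ext h)
        rcases Nat.lt_or_ge i.1 j.1 with h | h
        · have h2 := Nat.mul_le_mul_right B (show i.1 + 1 ≤ j.1 from h)
          have h3 : (i.1 + 1) * B = i.1 * B + B := by ring
          linarith
        · have h' : j.1 < i.1 := by omega
          have h2 := Nat.mul_le_mul_right B (show j.1 + 1 ≤ i.1 from h')
          have h3 : (j.1 + 1) * B = j.1 * B + B := by ring
          linarith
  have hb1 : ∀ b : Fin m, b.1 * B ≤ (m - 1) * B :=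
    fun b => Nat.mul_le_mul_right B (by have := b.isLt; omega)
  have memS : ∀ (i : Fin m) (x : V), x ∈ U i ∪ {v i, v (fsucc i)} →
      x ∈ U i ∨ x = v i ∨ x = v (fsucc i) := by
    intro i x hx
    rcases (Set.mem_union _ _ _).mp hx with h | h
    · exact Or.inl h
    · simp only [Set.mem_insert_iff, Set.mem_singleton_iff] at h
      exact Or.inr h
  have piece_nonwrap : ∀ i : Fin m, i.1 + 1 < m → ∀ x ∈ U i ∪ {v i, v (fsucc i)},
      i.1 * B ≤ σ x ∧ σ x ≤ (i.1 + 1) * B := by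
    intro i hi x hx
    have hs : (fsucc i).1 = i.1 + 1 := Nat.mod_eq_of_lt hi
    have he' : (i.1 + 1) * B = i.1 * B + B := by ring
    rcases memS i x hx with h | h | h
    · have a1 := hUlow i x h; have a2 := hUhigh i x h
      constructor <;> linarith
    · subst h; rw [hpv i]
      exact ⟨le_refl _, by linarith⟩
    · subst h; rw [hpv (fsucc i), hs]
      exact ⟨by linarith, le_refl _⟩
  have piece_wrap : ∀ i : Fin m, ¬ (i.1 + 1 < m) → ∀ x ∈ U i ∪ {v i, v (fsucc i)},
      σ x = 0 ∨ (m - 1) * B ≤ σ x := by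
    intro i hi x hx
    have him : i.1 = m - 1 := by have := i.isLt; omega
    have hs : (fsucc i).1 = 0 := by
      show (i.1 + 1) % m = 0
      have h' : i.1 + 1 = m := by have := i.isLt; omega
      rw [h', Nat.mod_self]
    rcases memS i x hx with h | h | h
    · right
      have := hUlow i x h; rw [him] at this; exact le_of_lt this
    · right; subst h; rw [hpv i, him]
    · left; subst h; rw [hpv (fsucc i), hs, Nat.zero_mul]
  have edge_class : ∀ e ∈ G.edgeSet, ∀ p q : V, e = s(p, q) →
      (e ∈ F ∧ ∃ a b : Fin m, p = v a ∧ q = v b) ∨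
      (e ∉ F ∧ ∃ i : Fin m, p ∈ U i ∪ {v i, v (fsucc i)} ∧ q ∈ U i ∪ {v i, v (fsucc i)} ∧
        (p ∈ U i ∨ q ∈ U i)) := by
    intro e he p q hepq
    by_cases hF : e ∈ F
    · left
      refine ⟨hF, ?_⟩
      obtain ⟨a, ha⟩ := hFW e hF p (by rw [hepq]; exact Sym2.mem_mk_left p q)
      obtain ⟨b, hb⟩ := hFW e hF q (by rw [hepq]; exact Sym2.mem_mk_right p q)
      exact ⟨a, b, ha.symm, hb.symm⟩
    · right
      refine ⟨hF, ?_⟩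
      rcases hpieces e he with h | ⟨i, hi⟩
      · exact absurd h hF
      have hp := hi p (by rw [hepq]; exact Sym2.mem_mk_left p q)
      have hq := hi q (by rw [hepq]; exact Sym2.mem_mk_right p q)
      refine ⟨i, hp, hq, ?_⟩
      by_contra hcon
      push_neg at hcon
      apply hF
      apply hWF e he
      intro x hx
      rw [hepq] at hx
      rcases Sym2.mem_iff.mp hx with rfl | rfl
      · rcases memS i _ hp with h' | h' | h'
        · exact absurd h' hcon.1
        · exact ⟨i, h'.symm⟩
        · exact ⟨fsucc i, h'.symm⟩
      · rcases memS i _ hq with h' | h' | h'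
        · exact absurd h' hcon.2
        · exact ⟨i, h'.symm⟩
        · exact ⟨fsucc i, h'.symm⟩
  have key : ∀ e ∈ G.edgeSet, ∀ f ∈ G.edgeSet,
      Interleaves (Sym2.map σ e) (Sym2.map σ f) → e ∈ F ∧ f ∈ F ∧ CrossIdx v e f := by
    intro e he f hf hI
    obtain ⟨p, q, r, s, hepq, hfrs, h1, h2, h3⟩ := OPAux.exists_cross σ e f hI
    rcases edge_class e he p q hepq with ⟨heF, a, b, rfl, rfl⟩ | ⟨heF, i, hpi, hqi, hce⟩
    · rcases edge_class f hf r s hfrs with ⟨hfF, c, d, rfl, rfl⟩ | ⟨hfF, j, hrj, hsj, hcf⟩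
      · rw [hpv a] at h1
        rw [hpv c] at h1 h2
        rw [hpv b] at h2 h3
        rw [hpv d] at h3
        exact ⟨heF, hfF, a, b, c, d, hepq, hfrs,
          Fin.lt_def.mpr (Nat.lt_of_mul_lt_mul_right h1),
          Fin.lt_def.mpr (Nat.lt_of_mul_lt_mul_right h2),
          Fin.lt_def.mpr (Nat.lt_of_mul_lt_mul_right h3)⟩
      · exfalso
        rw [hpv a] at h1
        rw [hpv b] at h2 h3
        by_cases hj : j.1 + 1 < m
        · obtain ⟨lr, ur⟩ := piece_nonwrap j hj r hrj
          obtain ⟨ls, us⟩ := piece_nonwrap j hj s hsj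
          have e1 := Nat.lt_of_mul_lt_mul_right (lt_of_le_of_lt lr h2)
          have e2 := Nat.lt_of_mul_lt_mul_right (lt_of_lt_of_le h3 us)
          omega
        · rcases piece_wrap j hj r hrj with h0 | hge
          · rw [h0] at h1; exact Nat.not_lt_zero _ h1
          · exact absurd (lt_of_le_of_lt hge (lt_of_lt_of_le h2 (hb1 b))) (lt_irrefl _)
    · rcases edge_class f hf r s hfrs with ⟨hfF, c, d, rfl, rfl⟩ | ⟨hfF, j, hrj, hsj, hcf⟩
      · exfalso
        rw [hpv c] at h1 h2
        rw [hpv d] at h3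
        by_cases hi : i.1 + 1 < m
        · obtain ⟨lp, up⟩ := piece_nonwrap i hi p hpi
          obtain ⟨lq, uq⟩ := piece_nonwrap i hi q hqi
          have e1 := Nat.lt_of_mul_lt_mul_right (lt_of_le_of_lt lp h1)
          have e2 := Nat.lt_of_mul_lt_mul_right (lt_of_lt_of_le h2 uq)
          omega
        · rcases piece_wrap i hi q hqi with h0 | hge
          · rw [h0] at h2; exact Nat.not_lt_zero _ h2
          · exact absurd (lt_of_le_of_lt hge (lt_of_lt_of_le h3 (hb1 d))) (lt_irrefl _)
      · rcases eq_or_ne i j with rfl | hij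
        · exfalso
          obtain ⟨u, hu⟩ : ∃ u, u ∈ U i := by
            rcases hce with h' | h'
            exacts [⟨p, h'⟩, ⟨q, h'⟩]
          have horder' : ∀ x ∈ U i ∪ {v i, v (fsucc i)}, ∀ y ∈ U i ∪ {v i, v (fsucc i)},
              x ≠ v (fsucc i) → y ≠ v (fsucc i) → (σ x < σ y ↔ t i x < t i y) := by
            intro x hx y hy hxw hyw
            rcases memS i x hx with hx' | hx' | hx'
            · rcases memS i y hy with hy' | hy' | hy'
              · exact hUord i x hx' y hy'
              · subst hy'
                refine iff_of_false ?_ ?_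
                · rw [hpv i]; exact not_lt.mpr (le_of_lt (hUlow i x hx'))
                · exact not_lt.mpr (le_of_lt (ht2 i x hx').1)
              · exact absurd hy' hyw
            · subst hx'
              rcases memS i y hy with hy' | hy' | hy'
              · refine iff_of_true ?_ ((ht2 i y hy').1)
                rw [hpv i]; exact hUlow i y hy'
              · subst hy'
                exact iff_of_false (lt_irrefl _) (lt_irrefl _)
              · exact absurd hy' hyw
            · exact absurd hx' hxw
          have hτmax' : ∀ x ∈ U i ∪ {v i, v (fsucc i)}, x ≠ v (fsucc i) →
              t i x < t i (v (fsucc i)) := by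
            intro x hx hxw
            rcases memS i x hx with h' | h' | h'
            · exact (ht2 i x h').2
            · subst h'; exact lt_trans (ht2 i u hu).1 (ht2 i u hu).2
            · exact absurd h' hxw
          have hcase' : (∀ x ∈ U i ∪ {v i, v (fsucc i)}, x ≠ v (fsucc i) →
                σ x < σ (v (fsucc i)))
              ∨ (∀ x ∈ U i ∪ {v i, v (fsucc i)}, x ≠ v (fsucc i) →
                σ (v (fsucc i)) < σ x) := by
            by_cases hi2 : i.1 + 1 < m
            · left
              intro x hx hxw
              have hs : (fsucc i).1 = i.1 + 1 := Nat.mod_eq_of_lt hi2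
              rw [hpv (fsucc i), hs]
              have he' : (i.1 + 1) * B = i.1 * B + B := by ring
              rcases memS i x hx with h' | h' | h'
              · have := hUhigh i x h'; linarith
              · rw [h', hpv i]; linarith
              · exact absurd h' hxw
            · right
              intro x hx hxw
              have hs : (fsucc i).1 = 0 := by
                show (i.1 + 1) % m = 0
                have h' : i.1 + 1 = m := by have := i.isLt; omega
                rw [h', Nat.mod_self]
              rw [hpv (fsucc i), hs, Nat.zero_mul]
              rcases memS i x hx with h' | h' | h'
              · exact lt_of_le_of_lt (Nat.zero_le _) (hUlow i x h')
              · rw [h', hpv i]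
                have hne0 : i.1 ≠ 0 := by
                  intro h0
                  apply hxw
                  rw [h']
                  congr 1
                  exact Fin.ext (h0.trans hs.symm)
                exact Nat.mul_pos (Nat.pos_of_ne_zero hne0) hBpos
              · exact absurd h' hxw
          have heS : ∀ x ∈ e, x ∈ U i ∪ {v i, v (fsucc i)} := by
            intro x hx
            rw [hepq] at hx
            rcases Sym2.mem_iff.mp hx with rfl | rfl
            exacts [hpi, hqi]
          have hfS : ∀ x ∈ f, x ∈ U i ∪ {v i, v (fsucc i)} := by
            intro x hx
            rw [hfrs] at hx
            rcases Sym2.mem_iff.mp hx with rfl | rfl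
            exacts [hrj, hsj]
          rcases OPAux.rotation σ (t i) (U i ∪ {v i, v (fsucc i)}) (v (fsucc i))
              horder' hτmax' hcase' heS hfS hI with hI' | hI'
          · exact ht3 i e he f hf heS hfS hI'
          · exact ht3 i f hf e he hfS heS hI'
        · exfalso
          by_cases hi : i.1 + 1 < m <;> by_cases hj : j.1 + 1 < m
          · obtain ⟨lp, up⟩ := piece_nonwrap i hi p hpi
            obtain ⟨lq, uq⟩ := piece_nonwrap i hi q hqi
            obtain ⟨lr, ur⟩ := piece_nonwrap j hj r hrj
            have e1 := Nat.lt_of_mul_lt_mul_right (lt_of_le_of_lt lr (lt_of_lt_of_le h2 uq))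
            have e2 := Nat.lt_of_mul_lt_mul_right (lt_of_le_of_lt lp (lt_of_lt_of_le h1 ur))
            exact hij (Fin.ext (by omega))
          · obtain ⟨lq, uq⟩ := piece_nonwrap i hi q hqi
            rcases piece_wrap j hj r hrj with h0 | hge
            · rw [h0] at h1; exact Nat.not_lt_zero _ h1
            · have e1 : (i.1 + 1) * B ≤ (m - 1) * B :=
                Nat.mul_le_mul_right B (by have := i.isLt; omega)
              exact absurd (lt_of_le_of_lt hge (lt_of_lt_of_le h2 (le_trans uq e1)))
                (lt_irrefl _)
          · obtain ⟨ls, us⟩ := piece_nonwrap j hj s hsj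
            rcases piece_wrap i hi q hqi with h0 | hge
            · rw [h0] at h2; exact Nat.not_lt_zero _ h2
            · have e1 : (j.1 + 1) * B ≤ (m - 1) * B :=
                Nat.mul_le_mul_right B (by have := j.isLt; omega)
              exact absurd (lt_of_le_of_lt hge (lt_of_lt_of_le h3 (le_trans us e1)))
                (lt_irrefl _)
          · exact hij (Fin.ext (by have := i.isLt; have := j.isLt; omega))
  refine ⟨σ, hinj, ?_⟩
  have hsub : {p : Sym2 V × Sym2 V | p.1 ∈ G.edgeSet ∧ p.2 ∈ G.edgeSet ∧
      Interleaves (p.1.map σ) (p.2.map σ)} ⊆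
      {p : Sym2 V × Sym2 V | p.1 ∈ F ∧ p.2 ∈ F ∧ CrossIdx v p.1 p.2} := by
    rintro ⟨e, f⟩ ⟨he, hf, hI⟩
    exact key e he f hf hI
  have hfin : {p : Sym2 V × Sym2 V | p.1 ∈ F ∧ p.2 ∈ F ∧ CrossIdx v p.1 p.2}.Finite := by
    apply Set.Finite.subset (Set.Finite.prod F.finite_toSet F.finite_toSet)
    rintro ⟨e, f⟩ ⟨hh1, hh2, _⟩
    exact ⟨hh1, hh2⟩
  exact le_trans (Set.ncard_le_ncard hsub hfin) hcross
end
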